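/- Let k be a commutative noetherian ring, A a k-algebra which is flat as a k-module, M a left A-module, (F_i)_{i∈I} a family of rank one free right A-modules, and D a free A ⊗_k Aᵒᵖ-module. Then the canonical morphism D ⊗_{A ⊗_k Aᵒᵖ} (M ⊗_k ∏_{i∈I} F_i) → ∏_{i∈I} (D ⊗_{A ⊗_k Aᵒᵖ} (M ⊗_k F_i)) is injective. -/

import Mathlib

/-! A basis `b` of the free right module `D` identifies `D ⊗_R X` with `ι →₀ X` through
`d ⊗ x ↦ (unop (b.repr d j) • x)ⱼ`, naturally in `X`; so `D ⊗_R -` preserves jointly injective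
families, and it suffices that `M ⊗_k ∏ Fᵢ → ∏ (M ⊗_k Fᵢ)` is injective. This map is bijective
for `M = kⁿ`, hence surjective for every finite `M` by right exactness, and, `k` being
noetherian, injective for finite `M` by a chase through a presentation `K → kⁿ → M → 0` with `K`
finite. A general `M` is the union of its finite submodules, and the `Fᵢ ≅ A` are flat over `k`,
so injectivity passes to `M`. -/

open TensorProduct MulOpposite CategoryTheory

universe u v w x

set_option linter.unusedSectionVars false
set_option linter.unusedVariables false

noncomputable section

section BimoduleTensor
variable (k : Type u) (A : Type v) [CommRing k] [Ring A] [Algebra k A]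
variable (M : Type w) [AddCommGroup M] [Module k M] [Module A M] [IsScalarTower k A M]
variable (N : Type w') [AddCommGroup N] [Module k N] [Module Aᵐᵒᵖ N] [IsScalarTower k Aᵐᵒᵖ N]

/-- Right `A`-action on `M ⊗[k] N` through the second factor. -/
def rightEnd : Aᵐᵒᵖ →+* Module.End k (M ⊗[k] N) where
  toFun a := LinearMap.lTensor M ((Algebra.lsmul k k N) a)
  map_one' := by (try dsimp only); rw [map_one]; exact LinearMap.lTensor_id M N
  map_mul' a b := by (try dsimp only); rw [map_mul]; exact LinearMap.lTensor_comp M _ _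
  map_zero' := by (try dsimp only); rw [map_zero]; exact LinearMap.lTensor_zero M
  map_add' a b := by (try dsimp only); rw [map_add]; exact LinearMap.lTensor_add M _ _

/-- `M ⊗[k] N` as a module over `Aᵐᵒᵖ` (through the second factor). -/
def tensorRightModule : Module Aᵐᵒᵖ (M ⊗[k] N) := Module.compHom _ (rightEnd k A M N)

theorem tensorRightModule_smul_tmul (a : Aᵐᵒᵖ) (m : M) (n : N) :
    letI := tensorRightModule k A M N
    a • (m ⊗ₜ[k] n) = m ⊗ₜ[k] (a • n) := rfl

theorem tensorRightModule_isScalarTower :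
    letI := tensorRightModule k A M N
    IsScalarTower k Aᵐᵒᵖ (M ⊗[k] N) := by
  letI := tensorRightModule k A M N
  constructor
  intro c a x
  induction x using TensorProduct.induction_on with
  | zero => simp only [smul_zero]
  | tmul m n =>
      rw [tensorRightModule_smul_tmul, tensorRightModule_smul_tmul, smul_assoc, tmul_smul]
  | add x y hx hy => rw [smul_add, smul_add, smul_add, hx, hy]

theorem tensorRightModule_smulCommClass :
    letI := tensorRightModule k A M N
    SMulCommClass A Aᵐᵒᵖ (M ⊗[k] N) := by
  letI := tensorRightModule k A M N
  constructor
  intro a b x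
  induction x using TensorProduct.induction_on with
  | zero => simp only [smul_zero]
  | tmul m n =>
      rw [tensorRightModule_smul_tmul, smul_tmul', smul_tmul', tensorRightModule_smul_tmul]
  | add x y hx hy => rw [smul_add, smul_add, smul_add, smul_add, hx, hy]

/-- The `k`-central `A`-bimodule structure on `M ⊗[k] N`, as a module over the enveloping
algebra `A ⊗[k] Aᵐᵒᵖ`: here `A` acts on the left factor and `Aᵐᵒᵖ` on the right factor. -/
def bimoduleTensorModule : Module (A ⊗[k] Aᵐᵒᵖ) (M ⊗[k] N) :=
  letI := tensorRightModule k A M N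
  haveI := tensorRightModule_isScalarTower k A M N
  haveI := tensorRightModule_smulCommClass k A M N
  TensorProduct.Algebra.module

theorem bimoduleTensorModule_smul_tmul (a b : A) (m : M) (n : N) :
    letI := bimoduleTensorModule k A M N
    (a ⊗ₜ[k] (op b)) • (m ⊗ₜ[k] n) = (a • m) ⊗ₜ[k] ((op b) • n) := by
  letI := tensorRightModule k A M N
  letI := bimoduleTensorModule k A M N
  show (a • ((op b) • (m ⊗ₜ[k] n))) = (a • m) ⊗ₜ[k] ((op b) • n)
  rw [tensorRightModule_smul_tmul, smul_tmul']
end BimoduleTensor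

section BalTensor
variable (A : Type u) [Ring A]
variable (N : Type v) [AddCommGroup N] [Module Aᵐᵒᵖ N]
variable (M : Type w) [AddCommGroup M] [Module A M]

/-- The relations defining the balanced tensor product `N ⊗_A M` of a right `A`-module `N`
and a left `A`-module `M`. -/
def balRels : Submodule ℤ (N ⊗[ℤ] M) :=
  Submodule.span ℤ
    {x | ∃ (a : A) (n : N) (m : M), x = ((op a) • n) ⊗ₜ[ℤ] m - n ⊗ₜ[ℤ] (a • m)}

/-- The balanced tensor product `N ⊗_A M` of a right `A`-module `N` and a left `A`-module `M`,
defined as the quotient of `N ⊗[ℤ] M` by the submodule of balancing relations. -/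
abbrev BalTensor := (N ⊗[ℤ] M) ⧸ balRels A N M

variable {M}

/-- The functorial map `N ⊗_A M → N ⊗_A M'` induced by an `A`-linear map `M → M'`. -/
def balMap {M' : Type x} [AddCommGroup M'] [Module A M'] (f : M →ₗ[A] M') :
    BalTensor A N M →ₗ[ℤ] BalTensor A N M' :=
  Submodule.mapQ (balRels A N M) (balRels A N M')
    (LinearMap.lTensor N f.toAddMonoidHom.toIntLinearMap)
    (by
      rw [balRels, Submodule.span_le]
      rintro x ⟨a, n, m, rfl⟩
      show LinearMap.lTensor N f.toAddMonoidHom.toIntLinearMap _ ∈ balRels A N M'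
      rw [map_sub, LinearMap.lTensor_tmul, LinearMap.lTensor_tmul]
      have hsm : f.toAddMonoidHom.toIntLinearMap (a • m) = a • (f.toAddMonoidHom.toIntLinearMap m) := by
        simp [LinearMap.map_smul]
      rw [hsm]
      exact Submodule.subset_span ⟨a, n, f.toAddMonoidHom.toIntLinearMap m, rfl⟩)

variable {N} (M)

/-- The functorial map `N ⊗_A M → N' ⊗_A M` induced by a map `N → N'` of right `A`-modules. -/
def balMapLeft {N' : Type x} [AddCommGroup N'] [Module Aᵐᵒᵖ N'] (g : N →ₗ[Aᵐᵒᵖ] N') :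
    BalTensor A N M →ₗ[ℤ] BalTensor A N' M :=
  Submodule.mapQ (balRels A N M) (balRels A N' M)
    (LinearMap.rTensor M g.toAddMonoidHom.toIntLinearMap)
    (by
      rw [balRels, Submodule.span_le]
      rintro x ⟨a, n, m, rfl⟩
      show LinearMap.rTensor M g.toAddMonoidHom.toIntLinearMap _ ∈ balRels A N' M
      rw [map_sub, LinearMap.rTensor_tmul, LinearMap.rTensor_tmul]
      have hsm : g.toAddMonoidHom.toIntLinearMap ((op a) • n)
          = (op a) • (g.toAddMonoidHom.toIntLinearMap n) := by
        simp [LinearMap.map_smul]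
      rw [hsm]
      exact Submodule.subset_span ⟨a, g.toAddMonoidHom.toIntLinearMap n, m, rfl⟩)

variable (N)

/-- A right `A`-module `N` is *flat* if the functor `N ⊗_A (−)` is exact on left `A`-modules. -/
def RightFlat : Prop :=
  ∀ (M₁ M₂ M₃ : Type u) [AddCommGroup M₁] [Module A M₁] [AddCommGroup M₂] [Module A M₂]
    [AddCommGroup M₃] [Module A M₃] (f : M₁ →ₗ[A] M₂) (g : M₂ →ₗ[A] M₃),
    Function.Exact f g → Function.Exact (balMap A N f) (balMap A N g)

/-- The canonical comparison map `(∏ᵢ Fᵢ) ⊗_A M → ∏ᵢ (Fᵢ ⊗_A M)` induced by the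
projections `∏ᵢ Fᵢ → Fᵢ`. -/
def balPiCompare {I : Type x} (F : I → Type v) [∀ i, AddCommGroup (F i)]
    [∀ i, Module Aᵐᵒᵖ (F i)] :
    BalTensor A (∀ i, F i) M →ₗ[ℤ] ∀ i, BalTensor A (F i) M :=
  LinearMap.pi fun i => balMapLeft A M (LinearMap.proj i : (∀ j, F j) →ₗ[Aᵐᵒᵖ] F i)

end BalTensor

section BimodProj
variable (k : Type u) (A : Type u) [CommRing k] [Ring A] [Algebra k A]
variable (M : Type u) [AddCommGroup M] [Module k M] [Module A M] [IsScalarTower k A M]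
variable {I : Type u} (F : I → Type u) [∀ i, AddCommGroup (F i)] [∀ i, Module k (F i)]
  [∀ i, Module Aᵐᵒᵖ (F i)] [∀ i, IsScalarTower k Aᵐᵒᵖ (F i)]

/-- The map `M ⊗[k] (∏ⱼ Fⱼ) → M ⊗[k] Fᵢ` induced by the `i`-th projection, as a morphism of
modules over the enveloping algebra `A ⊗[k] Aᵐᵒᵖ`. -/
def bimodPiProj (i : I) :
    letI := bimoduleTensorModule k A M (∀ j, F j)
    letI := bimoduleTensorModule k A M (F i)
    (M ⊗[k] (∀ j, F j)) →ₗ[A ⊗[k] Aᵐᵒᵖ] (M ⊗[k] F i) :=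
  letI := bimoduleTensorModule k A M (∀ j, F j)
  letI := bimoduleTensorModule k A M (F i)
  { toFun := LinearMap.lTensor M (LinearMap.proj i : (∀ j, F j) →ₗ[k] F i)
    map_add' := map_add _
    map_smul' := by
      intro e x
      dsimp only [RingHom.id_apply]
      induction e using TensorProduct.induction_on with
      | zero => exact (congrArg _ (zero_smul (A ⊗[k] Aᵐᵒᵖ) x)).trans ((map_zero (LinearMap.lTensor M (LinearMap.proj i : (∀ j, F j) →ₗ[k] F i))).trans (zero_smul (A ⊗[k] Aᵐᵒᵖ) (LinearMap.lTensor M (LinearMap.proj i : (∀ j, F j) →ₗ[k] F i) x)).symm)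
      | tmul a b =>
          induction b using MulOpposite.rec' with
          | _ b =>
            induction x using TensorProduct.induction_on with
            | zero => simp only [smul_zero, map_zero]
            | tmul m g => rfl
            | add x y hx hy => rw [smul_add, map_add, hx, hy, map_add, smul_add]
      | add e f he hf => rw [add_smul, map_add, he, hf, add_smul] }
end BimodProj

namespace TensorProduct

open LinearMap

variable (k : Type*) [CommRing k] {I : Type*} (F : I → Type*) [∀ i, AddCommGroup (F i)]
  [∀ i, Module k (F i)]

lemma piRightHom_apply (N : Type*) [AddCommGroup N] [Module k N] (x : N ⊗[k] (∀ i, F i))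
    (i : I) : piRightHom k k N F x i = lTensor N (proj i) x := by
  induction x using TensorProduct.induction_on with
  | zero => simp
  | tmul n f => rfl
  | add x y hx hy => simp only [map_add, Pi.add_apply, hx, hy]

lemma piRightHom_rTensor {N N' : Type*} [AddCommGroup N] [Module k N] [AddCommGroup N']
    [Module k N'] (g : N →ₗ[k] N') (x : N ⊗[k] (∀ i, F i)) (i : I) :
    piRightHom k k N' F (rTensor _ g x) i = rTensor (F i) g (piRightHom k k N F x i) := by
  rw [piRightHom_apply, piRightHom_apply, ← LinearMap.comp_apply, ← LinearMap.comp_apply,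
    lTensor_comp_rTensor, rTensor_comp_lTensor]

lemma piRightHom_bijective_of_finFree (n : ℕ) :
    Function.Bijective (piRightHom k k (Fin n → k) F) := by
  have h : ⇑(piRightHom k k (Fin n → k) F) =
      (LinearEquiv.piCongrRight fun i =>
        (TensorProduct.comm k _ _ ≪≫ₗ piScalarRight k k (F i) (Fin n)).symm) ∘
      Function.swap ∘ (TensorProduct.comm k _ _ ≪≫ₗ piScalarRight k k (∀ i, F i) (Fin n)) := by
    refine funext fun x => funext fun i => (LinearEquiv.eq_symm_apply _).2 (funext fun t => ?_)
    simp only [Function.comp_apply, Function.swap]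
    induction x using TensorProduct.induction_on with
    | zero => simp
    | tmul c f => simp
    | add x y hx hy => simp only [map_add, Pi.add_apply, hx, hy]
  rw [h]
  exact (LinearEquiv.bijective _).comp (Function.swap_bijective.comp (LinearEquiv.bijective _))

lemma piRightHom_surjective_of_finite (N : Type*) [AddCommGroup N] [Module k N]
    [Module.Finite k N] : Function.Surjective (piRightHom k k N F) := by
  obtain ⟨n, π, hπ⟩ := Module.Finite.exists_fin' k N
  intro y
  choose x hx using fun i => rTensor_surjective (F i) hπ (y i)
  obtain ⟨v, hv⟩ := (piRightHom_bijective_of_finFree k F n).2 x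
  exact ⟨rTensor _ π v, funext fun i => by rw [piRightHom_rTensor, hv, hx]⟩

lemma piRightHom_injective_of_finite [IsNoetherianRing k] (N : Type*) [AddCommGroup N]
    [Module k N] [Module.Finite k N] : Function.Injective (piRightHom k k N F) := by
  obtain ⟨n, π, hπ⟩ := Module.Finite.exists_fin' k N
  let K := LinearMap.ker π
  have : Module.Finite k K := Module.Finite.iff_fg.mpr (IsNoetherian.noetherian _)
  rw [injective_iff_map_eq_zero]
  intro x hx
  obtain ⟨p, rfl⟩ := rTensor_surjective (∀ i, F i) hπ x
  have hp_ker : ∀ i, ∃ u, rTensor (F i) K.subtype u = piRightHom k k _ F p i := fun i =>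
    (rTensor_exact (F i) π.exact_subtype_ker_map hπ _).mp
      (by rw [← piRightHom_rTensor]; exact congrFun hx i)
  choose u hu using hp_ker
  obtain ⟨v, hv⟩ := piRightHom_surjective_of_finite k F K u
  have hp : rTensor _ K.subtype v = p := (piRightHom_bijective_of_finFree k F n).1 <|
    funext fun i => by rw [piRightHom_rTensor, hv, hu]
  rw [← hp, ← rTensor_comp_apply, π.comp_ker_subtype, rTensor_zero, LinearMap.zero_apply]

lemma piRightHom_injective_of_flat [IsNoetherianRing k] [∀ i, Module.Flat k (F i)]
    (N : Type*) [AddCommGroup N] [Module k N] : Function.Injective (piRightHom k k N F) := by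
  rw [injective_iff_map_eq_zero]
  intro x hx
  obtain ⟨N₀, _, hx₀⟩ :=
    exists_finite_submodule_left_of_setFinite {x} (Set.finite_singleton x)
  obtain ⟨x₀, rfl⟩ := hx₀ rfl
  have : piRightHom k k N₀ F x₀ = 0 := funext fun i =>
    Module.Flat.rTensor_preserves_injective_linearMap N₀.subtype N₀.injective_subtype <| by
      rw [Pi.zero_apply, map_zero, ← piRightHom_rTensor]; exact congrFun hx i
  rw [piRightHom_injective_of_finite k F N₀ (this.trans (map_zero _).symm), map_zero]

end TensorProduct

section FreeBalTensor

open LinearMap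

variable {R : Type*} [Ring R] {D : Type*} [AddCommGroup D] [Module Rᵐᵒᵖ D]
  {ι : Type*} (b : Module.Basis ι Rᵐᵒᵖ D) (X : Type*) [AddCommGroup X] [Module R X]

def basisCoordSmul : D →ₗ[ℤ] X →ₗ[ℤ] (ι →₀ X) :=
  LinearMap.mk₂ ℤ (fun d x => (b.repr d).mapRange (fun r => unop r • x) (by simp))
    (fun d d' x => by ext; simp [add_smul])
    (fun n d x => by ext; simp [mul_smul, Int.cast_smul_eq_zsmul]; exact smul_comm _ _ _)
    (fun d x x' => by ext; simp)
    (fun n d x => by ext; simp; exact smul_comm _ _ _)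

lemma basisCoordSmul_apply (d : D) (x : X) :
    basisCoordSmul b X d x = (b.repr d).mapRange (fun r => unop r • x) (by simp) := rfl

def balTensorToFinsupp : BalTensor R D X →ₗ[ℤ] (ι →₀ X) :=
  (balRels R D X).liftQ (lift (basisCoordSmul b X)) <| by
    rw [balRels, Submodule.span_le]
    rintro _ ⟨r, d, x, rfl⟩
    refine mem_ker.2 ((map_sub _ _ _).trans (sub_eq_zero.2 (Finsupp.ext fun j => ?_)))
    show basisCoordSmul b X (op r • d) x j = basisCoordSmul b X d (r • x) j
    simp [basisCoordSmul_apply, mul_smul]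

def finsuppToBalTensor : (ι →₀ X) →ₗ[ℤ] BalTensor R D X :=
  Finsupp.lsum ℤ fun j => (balRels R D X).mkQ ∘ₗ TensorProduct.mk ℤ D X (b j)

lemma balRels_mkQ_tmul_unop_smul (c : Rᵐᵒᵖ) (d : D) (x : X) :
    (balRels R D X).mkQ (d ⊗ₜ[ℤ] (unop c • x)) = (balRels R D X).mkQ ((c • d) ⊗ₜ[ℤ] x) :=
  Eq.symm <| (Submodule.Quotient.eq _).2 <| Submodule.subset_span ⟨unop c, d, x, rfl⟩

lemma finsuppToBalTensor_balTensorToFinsupp (z : BalTensor R D X) :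
    finsuppToBalTensor b X (balTensorToFinsupp b X z) = z := by
  obtain ⟨w, rfl⟩ := (balRels R D X).mkQ_surjective z
  induction w using TensorProduct.induction_on with
  | zero => simp
  | add u v hu hv => simp only [map_add, hu, hv]
  | tmul d x =>
    have hterm (j : ι) (c : Rᵐᵒᵖ) : ((balRels R D X).mkQ ∘ₗ TensorProduct.mk ℤ D X (b j))
        (unop c • x) = ((balRels R D X).mkQ ∘ₗ (TensorProduct.mk ℤ D X).flip x) (c • b j) :=
      balRels_mkQ_tmul_unop_smul X c (b j) x
    change finsuppToBalTensor b X (basisCoordSmul b X d x) = _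
    rw [basisCoordSmul_apply, finsuppToBalTensor, Finsupp.lsum_apply,
      Finsupp.sum_mapRange_index (by simp)]
    simp only [hterm]
    rw [← map_finsuppSum, ← Finsupp.linearCombination_apply, b.linearCombination_repr]
    rfl

lemma balTensorToFinsupp_balMap {X' : Type*} [AddCommGroup X'] [Module R X'] (f : X →ₗ[R] X')
    (z : BalTensor R D X) (j : ι) :
    balTensorToFinsupp b X' (balMap R D f z) j = f (balTensorToFinsupp b X z j) := by
  obtain ⟨w, rfl⟩ := (balRels R D X).mkQ_surjective z
  induction w using TensorProduct.induction_on with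
  | zero => simp
  | add u v hu hv => simp only [map_add, Finsupp.add_apply, hu, hv]
  | tmul d x =>
    show basisCoordSmul b X' d (f x) j = f (basisCoordSmul b X d x j)
    simp [basisCoordSmul_apply]

theorem balMap_pi_injective [Module.Free Rᵐᵒᵖ D] {J : Type*} {Y : J → Type*}
    [∀ j, AddCommGroup (Y j)] [∀ j, Module R (Y j)] (f : ∀ j, X →ₗ[R] Y j)
    (hf : Function.Injective (LinearMap.pi f)) :
    Function.Injective (LinearMap.pi fun j => balMap R D (f j)) := by
  let b := Module.Free.chooseBasis Rᵐᵒᵖ D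
  rw [injective_iff_map_eq_zero]
  intro z hz
  have hcoord : balTensorToFinsupp b X z = 0 := Finsupp.ext fun t =>
    (injective_iff_map_eq_zero _).1 hf _ <| funext fun j => by
      rw [pi_apply, ← balTensorToFinsupp_balMap, show balMap R D (f j) z = 0 from congrFun hz j,
        map_zero, Finsupp.zero_apply, Pi.zero_apply]
  rw [← finsuppToBalTensor_balTensorToFinsupp b X z, hcoord, map_zero]

end FreeBalTensor

/-- Let `k` be a commutative noetherian ring and `A` a `k`-algebra which is flat over `k`.
For a left `A`-module `M`, a family `(Fᵢ)` of rank one free right `A`-modules and a free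
`A ⊗[k] Aᵐᵒᵖ`-module `D` (regarded as a right module over the enveloping algebra), the
canonical morphism
`D ⊗_{A ⊗[k] Aᵐᵒᵖ} (M ⊗[k] ∏ᵢ Fᵢ) → ∏ᵢ (D ⊗_{A ⊗[k] Aᵐᵒᵖ} (M ⊗[k] Fᵢ))`
induced by the projections `∏ᵢ Fᵢ → Fᵢ` is injective. -/
theorem free_tensor_pi_injective (k A : Type u) [CommRing k] [IsNoetherianRing k]
    [Ring A] [Algebra k A] [Module.Flat k A]
    (M : Type u) [AddCommGroup M] [Module k M] [Module A M] [IsScalarTower k A M]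
    (I : Type u) (F : I → Type u) [∀ i, AddCommGroup (F i)] [∀ i, Module k (F i)]
    [∀ i, Module Aᵐᵒᵖ (F i)] [∀ i, IsScalarTower k Aᵐᵒᵖ (F i)]
    (hF : ∀ i, Nonempty (F i ≃ₗ[Aᵐᵒᵖ] A))
    (D : Type u) [AddCommGroup D] [Module (A ⊗[k] Aᵐᵒᵖ)ᵐᵒᵖ D]
    [Module.Free (A ⊗[k] Aᵐᵒᵖ)ᵐᵒᵖ D] :
    letI := bimoduleTensorModule k A M (∀ j, F j)
    letI := fun i => bimoduleTensorModule k A M (F i)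
    letI : ∀ i, AddCommGroup (BalTensor (A ⊗[k] Aᵐᵒᵖ) D (M ⊗[k] F i)) := fun i => inferInstance
    Function.Injective
      (LinearMap.pi fun i =>
        balMap (A ⊗[k] Aᵐᵒᵖ) D (bimodPiProj k A M F i) :
        BalTensor (A ⊗[k] Aᵐᵒᵖ) D (M ⊗[k] (∀ j, F j)) →ₗ[ℤ]
          ∀ i, BalTensor (A ⊗[k] Aᵐᵒᵖ) D (M ⊗[k] F i)) := by
  let := bimoduleTensorModule k A M (∀ j, F j)
  let := fun i => bimoduleTensorModule k A M (F i)
  have : ∀ i, Module.Flat k (F i) := fun i =>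
    Module.Flat.of_linearEquiv ((hF i).some.restrictScalars k)
  refine balMap_pi_injective _ (bimodPiProj k A M F) fun x y hxy => ?_
  refine TensorProduct.piRightHom_injective_of_flat k F M (funext fun i => ?_)
  rw [TensorProduct.piRightHom_apply, TensorProduct.piRightHom_apply]
  exact congrFun hxy i
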